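/- arXiv:1501.00676 — 4 statements merged into one kernel-verified Lean document; each statement's English description precedes it below -/
import Mathlib

section
/- If the maps (x,u) ↦ ∫ f(y) p(dy|x,u), for f ∈ C(S) with ||f|| ≤ 1, are equicontinuous, then the family {Tf : f ∈ C(S), ||f|| ≤ R} is equicontinuous and uniformly bounded by e^{r_M} R; consequently T : C(S) → C(S) is a compact operator. -/
open MeasureTheory

/-- Closure of a subsingleton set in a metric space is compact. -/
lemma aux_isCompact_closure_of_subsingleton {X : Type*} [MetricSpace X] {s : Set X}
    (h : s.Subsingleton) : IsCompact (closure s) := by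
  have hf := h.finite
  rw [hf.isClosed.closure_eq]
  exact hf.isCompact

/-- If the maps `(x,u) ↦ ∫ f dp(·|x,u)`, `‖f‖ ≤ 1`, are equicontinuous, then
`{T f : ‖f‖ ≤ R}` is equicontinuous and uniformly bounded by `e^{r_M} R`; consequently the
(nonlinear) operator `T` is compact: the image of the `R`-ball has compact closure in `C(S)`. -/
theorem bellman_equicontinuous_and_compact
    {S U : Type*} [MetricSpace S] [CompactSpace S] [MeasurableSpace S] [BorelSpace S]
    [MetricSpace U] [CompactSpace U]
    (p : S → U → Measure S) (hp : ∀ x u, IsProbabilityMeasure (p x u))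
    (er : S → U → S → ℝ) (her_nonneg : ∀ x u y, 0 ≤ er x u y)
    (her_cont : Continuous fun q : S × U × S => er q.1 q.2.1 q.2.2)
    (eRM : ℝ) (heRM : eRM = ⨆ q : S × U × S, er q.1 q.2.1 q.2.2)
    (hequi : Equicontinuous fun (fu : {f : C(S, ℝ) // ‖f‖ ≤ 1} × U) (x : S) =>
      ∫ y, (fu.1 : C(S, ℝ)) y ∂(p x fu.2))
    (T : C(S, ℝ) → S → ℝ)
    (hT : ∀ f x, T f x = ⨆ u : U, ∫ y, er x u y * f y ∂(p x u))
    (R : ℝ) (hR : 0 < R) :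
    (Equicontinuous fun (f : {f : C(S, ℝ) // ‖f‖ ≤ R}) (x : S) => T (f : C(S, ℝ)) x) ∧
    (∀ f : C(S, ℝ), ‖f‖ ≤ R → ∀ x, |T f x| ≤ eRM * R) ∧
    IsCompact (closure {g : C(S, ℝ) | ∃ f : C(S, ℝ), ‖f‖ ≤ R ∧ ∀ x, g x = T f x}) := by
  -- Degenerate case: S empty
  rcases isEmpty_or_nonempty S with hS | hS
  · have hsub : Subsingleton C(S, ℝ) := ⟨fun f g => ContinuousMap.ext fun x => isEmptyElim x⟩
    refine ⟨fun x => isEmptyElim x, fun f _ x => isEmptyElim x, ?_⟩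
    exact aux_isCompact_closure_of_subsingleton fun a _ b _ => hsub.allEq a b
  -- Degenerate case: U empty
  rcases isEmpty_or_nonempty U with hU | hU
  · have hT0 : ∀ f x, T f x = 0 := fun f x => by rw [hT]; exact Real.iSup_of_isEmpty _
    have heRM0 : eRM = 0 := by rw [heRM]; exact Real.iSup_of_isEmpty _
    refine ⟨?_, ?_, ?_⟩
    · intro x
      rw [Metric.equicontinuousAt_iff]
      intro ε hε
      exact ⟨1, one_pos, fun x' _ i => by simp [hT0, hε]⟩
    · intro f hf x
      rw [hT0, heRM0, zero_mul, abs_zero]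
    · apply aux_isCompact_closure_of_subsingleton
      rintro a ⟨f, _, ha⟩ b ⟨g, _, hb⟩
      exact ContinuousMap.ext fun x => by rw [ha x, hb x, hT0, hT0]
  -- Main case
  haveI : Nonempty (S × U × S) := inferInstance
  -- er is bounded above by eRM and eRM ≥ 0
  obtain ⟨q0, -, hq0max⟩ := isCompact_univ.exists_isMaxOn Set.univ_nonempty
    her_cont.continuousOn
  have hq0 : ∀ q : S × U × S, er q.1 q.2.1 q.2.2 ≤ er q0.1 q0.2.1 q0.2.2 :=
    fun q => hq0max (Set.mem_univ q)
  have hbdd : BddAbove (Set.range fun q : S × U × S => er q.1 q.2.1 q.2.2) := by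
    refine ⟨er q0.1 q0.2.1 q0.2.2, ?_⟩
    rintro _ ⟨q, rfl⟩
    exact hq0 q
  have her_le : ∀ x u y, er x u y ≤ eRM := fun x u y => by
    rw [heRM]; exact le_ciSup hbdd (x, u, y)
  have heRM_nonneg : 0 ≤ eRM :=
    le_trans (her_nonneg q0.1 q0.2.1 q0.2.2) (her_le _ _ _)
  -- continuity in y
  have hcy : ∀ (x : S) (u : U) (f : C(S, ℝ)), Continuous fun y => er x u y * f y := by
    intro x u f
    exact (her_cont.comp (continuous_const.prodMk
      (continuous_const.prodMk continuous_id))).mul f.continuous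
  -- integrability
  have hint : ∀ (f : C(S, ℝ)) (x' x : S) (u : U),
      Integrable (fun y => er x' u y * f y) (p x u) := by
    intro f x' x u
    haveI := hp x u
    have := ((hcy x' u f).continuousOn.integrableOn_compact (μ := p x u) isCompact_univ)
    rwa [integrableOn_univ] at this
  -- bound per u
  have hIbound : ∀ (f : C(S, ℝ)), ‖f‖ ≤ R → ∀ x u,
      |∫ y, er x u y * f y ∂(p x u)| ≤ eRM * R := by
    intro f hf x u
    haveI := hp x u
    have h1 : ∀ᵐ y ∂(p x u), ‖er x u y * f y‖ ≤ eRM * R := by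
      filter_upwards with y
      rw [norm_mul, Real.norm_eq_abs, abs_of_nonneg (her_nonneg x u y)]
      exact mul_le_mul (her_le x u y) (le_trans (f.norm_coe_le_norm y) hf)
        (norm_nonneg _) heRM_nonneg
    have := norm_integral_le_of_norm_le_const h1
    simpa [Real.norm_eq_abs, measure_univ] using this
  have hbddI : ∀ (f : C(S, ℝ)) (x : S), ‖f‖ ≤ R →
      BddAbove (Set.range fun u => ∫ y, er x u y * f y ∂(p x u)) := by
    intro f x hf
    refine ⟨eRM * R, ?_⟩
    rintro _ ⟨u, rfl⟩
    exact (abs_le.1 (hIbound f hf x u)).2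
  -- boundedness of T
  have hTbound : ∀ f : C(S, ℝ), ‖f‖ ≤ R → ∀ x, |T f x| ≤ eRM * R := by
    intro f hf x
    rw [hT, abs_le]
    obtain ⟨u0⟩ := ‹Nonempty U›
    constructor
    · exact le_trans (abs_le.1 (hIbound f hf x u0)).1 (le_ciSup (hbddI f x hf) u0)
    · exact ciSup_le fun u => (abs_le.1 (hIbound f hf x u)).2
  -- The key uniform estimate
  have key : ∀ (x0 : S), ∀ ε > 0, ∃ δ > 0, ∀ x, dist x x0 < δ →
      ∀ f : C(S, ℝ), ‖f‖ ≤ R → dist (T f x0) (T f x) < ε := by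
    intro x0 ε hε
    set M : ℝ := eRM * R + 1 with hMdef
    have hM0 : 0 < M := by positivity
    have heRM_le_M : eRM * R ≤ M := by simp [hMdef]
    have huc := CompactSpace.uniformContinuous_of_continuous her_cont
    rw [Metric.uniformContinuous_iff] at huc
    obtain ⟨δ1, hδ1, h1⟩ := huc (ε / 4 / R) (by positivity)
    have hEA := hequi x0
    rw [Metric.equicontinuousAt_iff] at hEA
    obtain ⟨δ2, hδ2, h2⟩ := hEA (ε / (4 * M)) (by positivity)
    refine ⟨min δ1 δ2, lt_min hδ1 hδ2, fun x hx f hf => ?_⟩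
    haveI := hp x0; haveI := fun u => hp x u; haveI := fun u => hp x0 u
    have hu : ∀ u : U, |(∫ y, er x0 u y * f y ∂(p x0 u)) -
        ∫ y, er x u y * f y ∂(p x u)| ≤ ε / 2 := by
      intro u
      set Au : ℝ := ∫ y, er x0 u y * f y ∂(p x0 u) with hAu
      set Bu : ℝ := ∫ y, er x u y * f y ∂(p x u) with hBu
      set Cu : ℝ := ∫ y, er x0 u y * f y ∂(p x u) with hCu
      -- second term : |Cu - Bu| ≤ ε/4
      have hterm2 : |Cu - Bu| ≤ ε / 4 := by
        rw [hCu, hBu, ← integral_sub (hint f x0 x u) (hint f x x u)]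
        have hpt : ∀ᵐ y ∂(p x u), ‖er x0 u y * f y - er x u y * f y‖ ≤ ε / 4 / R * R := by
          filter_upwards with y
          rw [← sub_mul, Real.norm_eq_abs, abs_mul]
          have hdq : dist ((x0, u, y) : S × U × S) ((x, u, y) : S × U × S) = dist x0 x := by
            simp [Prod.dist_eq, max_eq_left dist_nonneg]
          have h1' := h1 (show dist ((x0, u, y) : S × U × S) ((x, u, y) : S × U × S) < δ1 by
            rw [hdq, dist_comm]; exact lt_of_lt_of_le hx (min_le_left _ _))
          rw [Real.dist_eq] at h1'
          have hfy : |f y| ≤ R := le_trans (f.norm_coe_le_norm y) hf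
          exact mul_le_mul h1'.le hfy (abs_nonneg _) (by positivity)
        have hns := norm_integral_le_of_norm_le_const hpt
        rw [Real.norm_eq_abs] at hns
        calc |∫ y, (er x0 u y * f y - er x u y * f y) ∂(p x u)|
            ≤ ε / 4 / R * R * ((p x u) Set.univ).toReal := hns
          _ = ε / 4 := by
              rw [measure_univ, ENNReal.toReal_one, mul_one, div_mul_cancel₀]
              exact ne_of_gt hR
      -- first term : |Au - Cu| ≤ ε/4, using equicontinuity of the normalized family
      have hterm1 : |Au - Cu| ≤ ε / 4 := by
        have hgc : Continuous fun y => M⁻¹ * (er x0 u y * f y) :=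
          continuous_const.mul (hcy x0 u f)
        set g : C(S, ℝ) := ⟨fun y => M⁻¹ * (er x0 u y * f y), hgc⟩ with hgdef
        have hbnd : ∀ y, |er x0 u y * f y| ≤ eRM * R := by
          intro y
          rw [abs_mul, abs_of_nonneg (her_nonneg x0 u y)]
          exact mul_le_mul (her_le x0 u y) (le_trans (f.norm_coe_le_norm y) hf)
            (abs_nonneg _) heRM_nonneg
        have hgnorm : ‖g‖ ≤ 1 := by
          rw [ContinuousMap.norm_le _ zero_le_one]
          intro y
          show ‖M⁻¹ * (er x0 u y * f y)‖ ≤ 1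
          rw [Real.norm_eq_abs, abs_mul, abs_of_nonneg (le_of_lt (inv_pos.2 hM0))]
          calc M⁻¹ * |er x0 u y * f y| ≤ M⁻¹ * M :=
                mul_le_mul_of_nonneg_left (le_trans (hbnd y) heRM_le_M)
                  (le_of_lt (inv_pos.2 hM0))
            _ = 1 := inv_mul_cancel₀ (ne_of_gt hM0)
        have hg2 := h2 x (lt_of_lt_of_le hx (min_le_right _ _)) (⟨g, hgnorm⟩, u)
        have hgint : ∀ z : S, (∫ y, g y ∂(p z u)) =
            M⁻¹ * ∫ y, er x0 u y * f y ∂(p z u) := by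
          intro z
          show (∫ y, M⁻¹ * (er x0 u y * f y) ∂(p z u)) = _
          rw [integral_const_mul]
        simp only at hg2
        rw [Real.dist_eq, hgint x0, hgint x, ← hAu, ← hCu, ← mul_sub, abs_mul,
          abs_of_nonneg (le_of_lt (inv_pos.2 hM0))] at hg2
        have : |Au - Cu| < M * (ε / (4 * M)) := by
          calc |Au - Cu| = M * (M⁻¹ * |Au - Cu|) := by
                rw [← mul_assoc, mul_inv_cancel₀ (ne_of_gt hM0), one_mul]
            _ < M * (ε / (4 * M)) := by
                exact mul_lt_mul_of_pos_left hg2 hM0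
        have hMM : M * (ε / (4 * M)) = ε / 4 := by
          field_simp
        linarith [this, hMM ▸ this]
      calc |Au - Bu| ≤ |Au - Cu| + |Cu - Bu| := abs_sub_le Au Cu Bu
        _ ≤ ε / 4 + ε / 4 := add_le_add hterm1 hterm2
        _ = ε / 2 := by ring
    -- compare the suprema
    have hbA := hbddI f x0 hf
    have hbB := hbddI f x hf
    have hsup : |(⨆ u : U, ∫ y, er x0 u y * f y ∂(p x0 u)) -
        ⨆ u : U, ∫ y, er x u y * f y ∂(p x u)| ≤ ε / 2 := by
      rw [abs_sub_le_iff]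
      constructor
      · rw [sub_le_iff_le_add]
        refine ciSup_le fun u => ?_
        have := (abs_sub_le_iff.1 (hu u)).1
        have hle := le_ciSup hbB u
        linarith
      · rw [sub_le_iff_le_add]
        refine ciSup_le fun u => ?_
        have := (abs_sub_le_iff.1 (hu u)).2
        have hle := le_ciSup hbA u
        linarith
    rw [Real.dist_eq, hT, hT]
    exact lt_of_le_of_lt hsup (by linarith)
  refine ⟨?_, hTbound, ?_⟩
  · intro x0
    rw [Metric.equicontinuousAt_iff]
    intro ε hε
    obtain ⟨δ, hδ0, hδ⟩ := key x0 ε hε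
    exact ⟨δ, hδ0, fun x hx i => hδ x hx i.1 i.2⟩
  · set A : Set C(S, ℝ) := {g : C(S, ℝ) | ∃ f : C(S, ℝ), ‖f‖ ≤ R ∧ ∀ x, g x = T f x} with hAdef
    set e := ContinuousMap.isometryEquivBoundedOfCompact S ℝ with hedef
    have happ : ∀ (g : C(S, ℝ)) (z : S), (e g) z = g z := fun g z => rfl
    have hAA : Equicontinuous ((↑) : (e '' A) → S → ℝ) := by
      intro x0
      rw [Metric.equicontinuousAt_iff]
      intro ε hε
      obtain ⟨δ, hδ0, hδ⟩ := key x0 ε hε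
      refine ⟨δ, hδ0, fun x hx i => ?_⟩
      obtain ⟨g, hg, hge⟩ := i.2
      obtain ⟨f0, hf0, hgf⟩ := hg
      have hix : ∀ z : S, (i : BoundedContinuousFunction S ℝ) z = T f0 z := by
        intro z
        rw [← hge, happ, hgf]
      show dist ((i : BoundedContinuousFunction S ℝ) x0)
        ((i : BoundedContinuousFunction S ℝ) x) < ε
      rw [hix x0, hix x]
      exact hδ x hx f0 hf0
    have hin : ∀ (f : BoundedContinuousFunction S ℝ) (x : S), f ∈ ⇑e '' A →
        f x ∈ Set.Icc (-(eRM * R)) (eRM * R) := by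
      rintro f x ⟨g, ⟨f0, hf0, hgf⟩, rfl⟩
      rw [Set.mem_Icc, happ, hgf]
      exact abs_le.1 (hTbound f0 hf0 x)
    have hcomp : IsCompact (closure (e '' A)) :=
      BoundedContinuousFunction.arzela_ascoli _ isCompact_Icc (e '' A) hin hAA
    rw [← Homeomorph.isCompact_image (h := e.toHomeomorph), Homeomorph.image_closure]
    exact hcomp
end

section
/- Suppose there exist ρ > 0 and a strictly positive continuous function ψ on S with Tψ = ρψ. Then ρ = inf_{f strictly positive in C(S)} sup_{μ ∈ M^+(S), μ≠0} (∫ Tf dμ)/(∫ f dμ) = sup_{f strictly positive in C(S)} inf_{μ ∈ M^+(S), μ≠0} (∫ Tf dμ)/(∫ f dμ). -/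
open MeasureTheory

lemma cw_integrable {S : Type*} [MetricSpace S] [CompactSpace S]
    [MeasurableSpace S] [BorelSpace S] (g : C(S, ℝ)) (μ : Measure S) [IsFiniteMeasure μ] :
    Integrable g μ := by
  have := g.continuous.continuousOn.integrableOn_compact (μ := μ) isCompact_univ
  simpa [IntegrableOn] using this

lemma cw_integral_pos {S : Type*} [MetricSpace S] [CompactSpace S] [Nonempty S]
    [MeasurableSpace S] [BorelSpace S] (g : C(S, ℝ)) (hg : ∀ x, 0 < g x)
    (μ : Measure S) [IsFiniteMeasure μ] (hμ : μ ≠ 0) : 0 < ∫ x, g x ∂μ := by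
  obtain ⟨x₀, -, hx₀⟩ := isCompact_univ.exists_isMinOn Set.univ_nonempty
    g.continuous.continuousOn
  have hμu : (0:ℝ) < (μ Set.univ).toReal := by
    refine ENNReal.toReal_pos ?_ (measure_ne_top μ _)
    simpa [Measure.measure_univ_eq_zero] using hμ
  calc (0:ℝ) < g x₀ * (μ Set.univ).toReal := mul_pos (hg x₀) hμu
    _ = ∫ _x, (g x₀ : ℝ) ∂μ := by simp [integral_const, mul_comm, Measure.real]
    _ ≤ ∫ x, g x ∂μ := by
        exact integral_mono (integrable_const _) (cw_integrable g μ)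
          (fun x => hx₀ (Set.mem_univ x))

/-- nonlinear Collatz–Wielandt formula. If the order preserving, positively
one-homogeneous, strongly positive operator `T` on `C(S)` has an eigenpair `T ψ = ρ ψ` with
`ρ > 0` and `ψ` strictly positive, then
`ρ = inf_{f ≫ 0} sup_{0 ≠ μ ∈ M⁺(S)} (∫ Tf dμ)/(∫ f dμ)
   = sup_{f ≫ 0} inf_{0 ≠ μ ∈ M⁺(S)} (∫ Tf dμ)/(∫ f dμ)`. -/
theorem collatz_wielandt_formula
    {S : Type*} [MetricSpace S] [CompactSpace S] [Nonempty S]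
    [MeasurableSpace S] [BorelSpace S]
    (T : C(S, ℝ) → C(S, ℝ))
    (hmono : ∀ f g : C(S, ℝ), f ≤ g → T f ≤ T g)
    (hhom : ∀ (c : ℝ), 0 < c → ∀ f : C(S, ℝ), T (c • f) = c • T f)
    (hstrongpos : ∀ f : C(S, ℝ), 0 ≤ f → f ≠ 0 → ∀ x, 0 < T f x)
    (ρ : ℝ) (hρ : 0 < ρ) (ψ : C(S, ℝ)) (hψ : ∀ x, 0 < ψ x) (heig : T ψ = ρ • ψ) :
    ρ = (⨅ f : {f : C(S, ℝ) // ∀ x, 0 < f x},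
          ⨆ μ : {μ : Measure S // IsFiniteMeasure μ ∧ μ ≠ 0},
            (∫ x, T (f : C(S, ℝ)) x ∂(μ : Measure S)) / ∫ x, (f : C(S, ℝ)) x ∂(μ : Measure S)) ∧
    ρ = (⨆ f : {f : C(S, ℝ) // ∀ x, 0 < f x},
          ⨅ μ : {μ : Measure S // IsFiniteMeasure μ ∧ μ ≠ 0},
            (∫ x, T (f : C(S, ℝ)) x ∂(μ : Measure S)) / ∫ x, (f : C(S, ℝ)) x ∂(μ : Measure S)) := by
  classical
  set F := {f : C(S, ℝ) // ∀ x, 0 < f x} with hF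
  set M := {μ : Measure S // IsFiniteMeasure μ ∧ μ ≠ 0} with hM
  -- the ratio function
  set R : F → M → ℝ := fun f μ =>
    (∫ x, T (f : C(S, ℝ)) x ∂(μ : Measure S)) / ∫ x, (f : C(S, ℝ)) x ∂(μ : Measure S) with hR
  -- dirac measures as elements of M
  have dirac_mem : ∀ x : S, IsFiniteMeasure (Measure.dirac x) ∧ Measure.dirac x ≠ 0 := by
    intro x
    refine ⟨inferInstance, ?_⟩
    intro h
    have := congrArg (fun ν : Measure S => ν Set.univ) h
    simp at this
  haveI : Nonempty M := ⟨⟨Measure.dirac (Classical.arbitrary S),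
    dirac_mem (Classical.arbitrary S)⟩⟩
  haveI : Nonempty F := ⟨⟨ψ, hψ⟩⟩
  -- basic facts about a strictly positive f
  have fnonneg : ∀ f : F, (0 : C(S, ℝ)) ≤ (f : C(S, ℝ)) := fun f x => (f.2 x).le
  have fne : ∀ f : F, (f : C(S, ℝ)) ≠ 0 := by
    intro f h
    have := f.2 (Classical.arbitrary S)
    rw [h] at this
    simp at this
  have Tpos : ∀ (f : F) (x : S), 0 < T (f : C(S, ℝ)) x := fun f =>
    hstrongpos _ (fnonneg f) (fne f)
  have denom_pos : ∀ (f : F) (μ : M),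
      0 < ∫ x, (f : C(S, ℝ)) x ∂(μ : Measure S) := by
    intro f μ
    haveI := μ.2.1
    exact cw_integral_pos _ f.2 _ μ.2.2
  have num_pos : ∀ (f : F) (μ : M),
      0 < ∫ x, T (f : C(S, ℝ)) x ∂(μ : Measure S) := by
    intro f μ
    haveI := μ.2.1
    exact cw_integral_pos _ (Tpos f) _ μ.2.2
  have R_nonneg : ∀ (f : F) (μ : M), 0 ≤ R f μ := fun f μ =>
    div_nonneg (num_pos f μ).le (denom_pos f μ).le
  -- ratio for a dirac measure
  have R_dirac : ∀ (f : F) (x : S),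
      R f ⟨Measure.dirac x, dirac_mem x⟩ = T (f : C(S, ℝ)) x / (f : C(S, ℝ)) x := by
    intro f x
    simp [hR, integral_dirac]
  -- upper bound for R f · : the max of Tf/f
  have R_bddAbove : ∀ f : F, ∃ C : ℝ, ∀ μ : M, R f μ ≤ C := by
    intro f
    obtain ⟨x₁, -, hx₁⟩ := isCompact_univ.exists_isMaxOn Set.univ_nonempty
      ((T (f : C(S, ℝ))).continuous.div (f : C(S, ℝ)).continuous
        (fun x => (f.2 x).ne')).continuousOn
    set C := T (f : C(S, ℝ)) x₁ / (f : C(S, ℝ)) x₁ with hC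
    refine ⟨C, ?_⟩
    intro μ
    haveI := μ.2.1
    have hle : ∀ x, T (f : C(S, ℝ)) x ≤ C * (f : C(S, ℝ)) x := by
      intro x
      have := hx₁ (Set.mem_univ x)
      have h2 : T (f : C(S, ℝ)) x / (f : C(S, ℝ)) x ≤ C := this
      exact (div_le_iff₀ (f.2 x)).mp h2
    have hint : ∫ x, T (f : C(S, ℝ)) x ∂(μ : Measure S)
        ≤ C * ∫ x, (f : C(S, ℝ)) x ∂(μ : Measure S) := by
      rw [← integral_const_mul]
      exact integral_mono (cw_integrable _ _)
        ((cw_integrable ((f : C(S, ℝ))) (μ : Measure S)).const_mul C) hle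
    exact (div_le_iff₀ (denom_pos f μ)).mpr hint
  -- at ψ, the ratio is always ρ
  have Rψ : ∀ μ : M, R ⟨ψ, hψ⟩ μ = ρ := by
    intro μ
    haveI := μ.2.1
    have h1 : ∫ x, T ψ x ∂(μ : Measure S) = ρ * ∫ x, ψ x ∂(μ : Measure S) := by
      rw [heig]
      simp only [ContinuousMap.smul_apply, smul_eq_mul, integral_const_mul]
    have h2 : 0 < ∫ x, ψ x ∂(μ : Measure S) := cw_integral_pos _ hψ _ μ.2.2
    simp only [hR]
    rw [h1, mul_div_assoc, div_self h2.ne', mul_one]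
  -- for every f, there is a dirac measure with ratio ≥ ρ
  have sup_ge : ∀ f : F, ∃ μ : M, ρ ≤ R f μ := by
    intro f
    obtain ⟨x₀, -, hx₀⟩ := isCompact_univ.exists_isMinOn Set.univ_nonempty
      ((f : C(S, ℝ)).continuous.div ψ.continuous (fun x => (hψ x).ne')).continuousOn
    set t := (f : C(S, ℝ)) x₀ / ψ x₀ with ht
    have htpos : 0 < t := div_pos (f.2 x₀) (hψ x₀)
    have hle : t • ψ ≤ (f : C(S, ℝ)) := by
      intro x
      have h2 : t ≤ (f : C(S, ℝ)) x / ψ x := hx₀ (Set.mem_univ x)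
      have := (le_div_iff₀ (hψ x)).mp h2
      simpa [smul_eq_mul] using this
    have hT : T (t • ψ) ≤ T (f : C(S, ℝ)) := hmono _ _ hle
    have hTt : T (t • ψ) = t • ((ρ : ℝ) • ψ) := by rw [hhom t htpos, heig]
    have key : ρ * (f : C(S, ℝ)) x₀ ≤ T (f : C(S, ℝ)) x₀ := by
      have h3 := hT x₀
      rw [hTt] at h3
      have h4 : t * (ρ * ψ x₀) ≤ T (f : C(S, ℝ)) x₀ := by simpa [smul_eq_mul] using h3
      have h5 : t * ψ x₀ = (f : C(S, ℝ)) x₀ := by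
        rw [ht, div_mul_cancel₀ _ (hψ x₀).ne']
      calc ρ * (f : C(S, ℝ)) x₀ = t * (ρ * ψ x₀) := by rw [← h5]; ring
        _ ≤ _ := h4
    refine ⟨⟨Measure.dirac x₀, dirac_mem x₀⟩, ?_⟩
    rw [R_dirac]
    exact (le_div_iff₀ (f.2 x₀)).mpr (by linarith [key])
  -- for every f, there is a dirac measure with ratio ≤ ρ
  have inf_le : ∀ f : F, ∃ μ : M, R f μ ≤ ρ := by
    intro f
    obtain ⟨x₀, -, hx₀⟩ := isCompact_univ.exists_isMaxOn Set.univ_nonempty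
      ((f : C(S, ℝ)).continuous.div ψ.continuous (fun x => (hψ x).ne')).continuousOn
    set t := (f : C(S, ℝ)) x₀ / ψ x₀ with ht
    have htpos : 0 < t := div_pos (f.2 x₀) (hψ x₀)
    have hle : (f : C(S, ℝ)) ≤ t • ψ := by
      intro x
      have h2 : (f : C(S, ℝ)) x / ψ x ≤ t := hx₀ (Set.mem_univ x)
      have := (div_le_iff₀ (hψ x)).mp h2
      simpa [smul_eq_mul, mul_comm] using this
    have hT : T (f : C(S, ℝ)) ≤ T (t • ψ) := hmono _ _ hle
    have hTt : T (t • ψ) = t • ((ρ : ℝ) • ψ) := by rw [hhom t htpos, heig]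
    have key : T (f : C(S, ℝ)) x₀ ≤ ρ * (f : C(S, ℝ)) x₀ := by
      have h3 := hT x₀
      rw [hTt] at h3
      have h4 : T (f : C(S, ℝ)) x₀ ≤ t * (ρ * ψ x₀) := by simpa [smul_eq_mul] using h3
      have h5 : t * ψ x₀ = (f : C(S, ℝ)) x₀ := by
        rw [ht, div_mul_cancel₀ _ (hψ x₀).ne']
      calc T (f : C(S, ℝ)) x₀ ≤ t * (ρ * ψ x₀) := h4
        _ = ρ * (f : C(S, ℝ)) x₀ := by rw [← h5]; ring
    refine ⟨⟨Measure.dirac x₀, dirac_mem x₀⟩, ?_⟩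
    rw [R_dirac]
    exact (div_le_iff₀ (f.2 x₀)).mpr (by linarith [key])
  -- assemble
  have bddA : ∀ f : F, BddAbove (Set.range (R f)) := by
    intro f
    obtain ⟨C, hC⟩ := R_bddAbove f
    exact ⟨C, by rintro _ ⟨μ, rfl⟩; exact hC μ⟩
  have bddB : ∀ f : F, BddBelow (Set.range (R f)) :=
    fun f => ⟨0, by rintro _ ⟨μ, rfl⟩; exact R_nonneg f μ⟩
  have Aψ : (⨆ μ : M, R ⟨ψ, hψ⟩ μ) = ρ := by
    simp only [Rψ]
    exact ciSup_const
  have Bψ : (⨅ μ : M, R ⟨ψ, hψ⟩ μ) = ρ := by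
    simp only [Rψ]
    exact ciInf_const
  have hAge : ∀ f : F, ρ ≤ ⨆ μ : M, R f μ := by
    intro f
    obtain ⟨μ, hμ⟩ := sup_ge f
    exact hμ.trans (le_ciSup (bddA f) μ)
  have hBle : ∀ f : F, (⨅ μ : M, R f μ) ≤ ρ := by
    intro f
    obtain ⟨μ, hμ⟩ := inf_le f
    exact (ciInf_le (bddB f) μ).trans hμ
  have hbb : BddBelow (Set.range fun f : F => ⨆ μ : M, R f μ) :=
    ⟨ρ, by rintro _ ⟨f, rfl⟩; exact hAge f⟩
  have hba : BddAbove (Set.range fun f : F => ⨅ μ : M, R f μ) :=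
    ⟨ρ, by rintro _ ⟨f, rfl⟩; exact hBle f⟩
  constructor
  · apply le_antisymm
    · exact le_ciInf hAge
    · exact (ciInf_le hbb (⟨ψ, hψ⟩ : F)).trans Aψ.le
  · apply le_antisymm
    · exact Bψ.ge.trans (le_ciSup hba (⟨ψ, hψ⟩ : F))
    · exact ciSup_le hBle
end

section
/- If ρψ(x) ≤ E[e^{r(x,Z_0,X_1)} ψ(X_1) | X_0 = x] holds for every admissible one-step state-control evolution, with ψ continuous and 0 < c ≤ ψ ≤ C, then for any admissible state-control sequence ((X_n,Z_n)), log ρ ≤ liminf_{n→∞} (1/n) log E[exp(Σ_{m=0}^{n-1} r(X_m,Z_m,X_{m+1})) | X_0 = x]. -/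
open MeasureTheory Filter

/-- if `ρ ψ(X_n) ≤ E[ e^{r(X_n,Z_n,X_{n+1})} ψ(X_{n+1}) | F_n ]` a.s. for every
step of an admissible state-control sequence `((X_n,Z_n))` (realized canonically on
`Ω = (S×U)^ℕ` with `F_n` the history σ-field), where `ψ` is continuous with `0 < c ≤ ψ ≤ C`,
then `log ρ ≤ liminf_n (1/n) log E[ e^{Σ_{m<n} r(X_m,Z_m,X_{m+1})} | X_0 = x ]`. -/
theorem log_rho_le_liminf_growth_rate
    {S U : Type*} [MetricSpace S] [CompactSpace S] [MeasurableSpace S] [BorelSpace S]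
    [MetricSpace U] [CompactSpace U] [MeasurableSpace U] [BorelSpace U]
    (er : S → U → S → ℝ) (her_nonneg : ∀ x u y, 0 ≤ er x u y)
    (her_cont : Continuous fun q : S × U × S => er q.1 q.2.1 q.2.2)
    (ρ : ℝ) (hρ : 0 < ρ) (ψ : C(S, ℝ)) (c C : ℝ) (hc : 0 < c)
    (hψ : ∀ y, c ≤ ψ y ∧ ψ y ≤ C)
    (P : Measure (ℕ → S × U)) (hP : IsProbabilityMeasure P)
    (x : S) (hx : P.map (fun ω => (ω 0).1) = Measure.dirac x)
    (F : ℕ → MeasurableSpace (ℕ → S × U))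
    (hF : ∀ n, F n = MeasurableSpace.comap (fun (ω : ℕ → S × U) (i : Fin (n + 1)) => ω i)
      inferInstance)
    (hstep : ∀ n : ℕ,
      (fun ω : ℕ → S × U => ρ * ψ (ω n).1) ≤ᵐ[P]
        MeasureTheory.condExp (F n) P
          (fun ω : ℕ → S × U => er (ω n).1 (ω n).2 (ω (n + 1)).1 * ψ (ω (n + 1)).1)) :
    Real.log ρ ≤ liminf (fun n : ℕ =>
      Real.log (∫ ω, (∏ m ∈ Finset.range n, er (ω m).1 (ω m).2 (ω (m + 1)).1) ∂P) / n)
      atTop := by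
  -- basic positivity facts
  have hC : 0 < C := lt_of_lt_of_le hc ((hψ x).1.trans (hψ x).2)
  -- uniform bound on er
  obtain ⟨M₀, hM₀⟩ := (isCompact_range her_cont).bddAbove
  set M : ℝ := max M₀ 1 with hMdef
  have hM1 : (1 : ℝ) ≤ M := le_max_right _ _
  have hMpos : (0 : ℝ) < M := lt_of_lt_of_le one_pos hM1
  have hMer : ∀ a b d, er a b d ≤ M := fun a b d =>
    le_trans (hM₀ ⟨(a, b, d), rfl⟩) (le_max_left _ _)
  -- notation
  have e : True := trivial
  let E : ℕ → (ℕ → S × U) → ℝ := fun m ω => er (ω m).1 (ω m).2 (ω (m + 1)).1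
  let Pi : ℕ → (ℕ → S × U) → ℝ := fun n ω => ∏ m ∈ Finset.range n, E m ω
  -- the filtration is contained in the ambient σ-algebra
  have hm0 : ∀ n, F n ≤ (inferInstance : MeasurableSpace (ℕ → S × U)) := by
    intro n
    rw [hF n]
    exact (measurable_pi_lambda _ fun i => measurable_pi_apply _).comap_le
  -- coordinates up to n are F n-measurable
  have hcoord : ∀ n i, i ≤ n → Measurable[F n] (fun ω : ℕ → S × U => ω i) := by
    intro n i hi
    rw [hF n]
    have h1 : Measurable[MeasurableSpace.comap
        (fun (ω : ℕ → S × U) (j : Fin (n + 1)) => ω j) inferInstance]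
        (fun (ω : ℕ → S × U) (j : Fin (n + 1)) => ω j) := Measurable.of_comap_le le_rfl
    exact (measurable_pi_apply (⟨i, Nat.lt_succ_of_le hi⟩ : Fin (n + 1))).comp h1
  -- E m is F n-measurable for m < n
  have heFn : ∀ n m, m < n → Measurable[F n] (E m) := by
    intro n m hm
    have h1 : Measurable[F n] (fun ω : ℕ → S × U =>
        ((ω m).1, ((ω m).2, (ω (m + 1)).1))) :=
      (measurable_fst.comp (hcoord n m hm.le)).prodMk
        ((measurable_snd.comp (hcoord n m hm.le)).prodMk
          (measurable_fst.comp (hcoord n (m + 1) hm)))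
    exact her_cont.measurable.comp h1
  have hPiFn : ∀ n, Measurable[F n] (Pi n) :=
    fun n => Finset.measurable_prod _ fun m hm => heFn n m (Finset.mem_range.mp hm)
  -- global measurability
  have heM : ∀ m, Measurable (E m) := by
    intro m
    have h1 : Measurable (fun ω : ℕ → S × U => ((ω m).1, ((ω m).2, (ω (m + 1)).1))) :=
      (measurable_fst.comp (measurable_pi_apply m)).prodMk
        ((measurable_snd.comp (measurable_pi_apply m)).prodMk
          (measurable_fst.comp (measurable_pi_apply (m + 1))))
    exact her_cont.measurable.comp h1
  have hPiM : ∀ n, Measurable (Pi n) :=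
    fun n => Finset.measurable_prod _ fun m _ => heM m
  have hψM : ∀ n, Measurable (fun ω : ℕ → S × U => ψ (ω n).1) :=
    fun n => ψ.continuous.measurable.comp (measurable_fst.comp (measurable_pi_apply n))
  -- pointwise bounds
  have hePos : ∀ m ω, 0 ≤ E m ω := fun m ω => her_nonneg _ _ _
  have hPiPos : ∀ n ω, 0 ≤ Pi n ω :=
    fun n ω => Finset.prod_nonneg fun m _ => hePos m ω
  have hPiBound : ∀ n ω, Pi n ω ≤ M ^ n := by
    intro n ω
    calc Pi n ω ≤ ∏ _m ∈ Finset.range n, M :=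
          Finset.prod_le_prod (fun m _ => hePos m ω) (fun m _ => hMer _ _ _)
      _ = M ^ n := by simp
  have hψabs : ∀ y, |ψ y| ≤ C := by
    intro y
    rw [abs_of_nonneg (le_of_lt (lt_of_lt_of_le hc (hψ y).1))]
    exact (hψ y).2
  -- integrability helper
  have hint : ∀ (f : (ℕ → S × U) → ℝ) (K : ℝ), Measurable f → (∀ ω, |f ω| ≤ K) →
      Integrable f P := by
    intro f K hf hK
    exact (integrable_const K).mono' hf.aestronglyMeasurable (ae_of_all _ hK)
  have hintPi : ∀ n, Integrable (Pi n) P := by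
    intro n
    refine hint _ (M ^ n) (hPiM n) fun ω => ?_
    rw [abs_of_nonneg (hPiPos n ω)]
    exact hPiBound n ω
  have hintPiψ : ∀ n, Integrable (fun ω => Pi n ω * ψ (ω n).1) P := by
    intro n
    refine hint _ (M ^ n * C) ((hPiM n).mul (hψM n)) fun ω => ?_
    rw [abs_mul]
    exact mul_le_mul (by rw [abs_of_nonneg (hPiPos n ω)]; exact hPiBound n ω)
      (hψabs _) (abs_nonneg _) (by positivity)
  have hintg : ∀ n, Integrable (fun ω : ℕ → S × U => E n ω * ψ (ω (n + 1)).1) P := by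
    intro n
    refine hint _ (M * C) ((heM n).mul (hψM (n + 1))) fun ω => ?_
    rw [abs_mul]
    exact mul_le_mul (by rw [abs_of_nonneg (hePos n ω)]; exact hMer _ _ _)
      (hψabs _) (abs_nonneg _) (by positivity)
  -- base case computation
  have hbase : ∫ ω, ψ (ω 0).1 ∂P = ψ x := by
    have h1 : Measurable (fun ω : ℕ → S × U => (ω 0).1) :=
      measurable_fst.comp (measurable_pi_apply 0)
    have h2 : ∫ y, ψ y ∂(P.map (fun ω => (ω 0).1)) = ∫ ω, ψ (ω 0).1 ∂P :=
      integral_map h1.aemeasurable (by rw [hx]; exact ψ.continuous.aestronglyMeasurable)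
    rw [← h2, hx, integral_dirac]
  -- the key induction: ρ^n * c ≤ ∫ Pi n * ψ(X n)
  have key : ∀ n, ρ ^ n * c ≤ ∫ ω, Pi n ω * ψ (ω n).1 ∂P := by
    intro n
    induction n with
    | zero =>
      simp only [pow_zero, one_mul, Pi, Finset.range_zero, Finset.prod_empty]
      simpa [hbase] using (hψ x).1
    | succ n ih =>
      haveI : SigmaFinite (P.trim (hm0 n)) := by
        have : IsFiniteMeasure (P.trim (hm0 n)) := isFiniteMeasure_trim _
        infer_instance
      set g : (ℕ → S × U) → ℝ := fun ω => E n ω * ψ (ω (n + 1)).1 with hg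
      -- rewrite the integrand
      have hsplit : (fun ω => Pi (n + 1) ω * ψ (ω (n + 1)).1)
          = fun ω => Pi n ω * g ω := by
        funext ω
        simp only [Pi, hg, Finset.prod_range_succ]
        ring
      have hintPig : Integrable (fun ω => Pi n ω * g ω) P := by
        rw [← hsplit]; exact hintPiψ (n + 1)
      -- pull out the F n-measurable factor from the conditional expectation
      have hpull : P[fun ω => Pi n ω * g ω | F n] =ᵐ[P] fun ω => Pi n ω * (P[g | F n]) ω :=
        condExp_mul_of_stronglyMeasurable_left (hPiFn n).stronglyMeasurable hintPig (hintg n)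
      have hint_ce : Integrable (fun ω => Pi n ω * (P[g | F n]) ω) P :=
        (integrable_condExp).congr hpull
      have h1 : ∫ ω, Pi (n + 1) ω * ψ (ω (n + 1)).1 ∂P
          = ∫ ω, Pi n ω * (P[g | F n]) ω ∂P := by
        calc ∫ ω, Pi (n + 1) ω * ψ (ω (n + 1)).1 ∂P
            = ∫ ω, Pi n ω * g ω ∂P := by rw [hsplit]
          _ = ∫ ω, (P[fun ω => Pi n ω * g ω | F n]) ω ∂P :=
              (integral_condExp (hm0 n)).symm
          _ = ∫ ω, Pi n ω * (P[g | F n]) ω ∂P := integral_congr_ae hpull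
      have h2 : ∫ ω, Pi n ω * (ρ * ψ (ω n).1) ∂P
          ≤ ∫ ω, Pi n ω * (P[g | F n]) ω ∂P := by
        refine integral_mono_ae ?_ hint_ce ?_
        · have heq : (fun ω => Pi n ω * (ρ * ψ (ω n).1))
              = fun ω => ρ * (Pi n ω * ψ (ω n).1) := by funext ω; ring
          rw [heq]
          exact (hintPiψ n).const_mul ρ
        · filter_upwards [hstep n] with ω hω
          exact mul_le_mul_of_nonneg_left hω (hPiPos n ω)
      have h3 : ∫ ω, Pi n ω * (ρ * ψ (ω n).1) ∂P = ρ * ∫ ω, Pi n ω * ψ (ω n).1 ∂P := by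
        rw [← integral_const_mul]
        congr 1
        funext ω
        ring
      calc ρ ^ (n + 1) * c = ρ * (ρ ^ n * c) := by ring
        _ ≤ ρ * ∫ ω, Pi n ω * ψ (ω n).1 ∂P := mul_le_mul_of_nonneg_left ih hρ.le
        _ = ∫ ω, Pi n ω * (ρ * ψ (ω n).1) ∂P := h3.symm
        _ ≤ ∫ ω, Pi n ω * (P[g | F n]) ω ∂P := h2
        _ = ∫ ω, Pi (n + 1) ω * ψ (ω (n + 1)).1 ∂P := h1.symm
  -- lower bound on J n := ∫ Pi n
  let J : ℕ → ℝ := fun n => ∫ ω, Pi n ω ∂P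
  have hJlow : ∀ n, ρ ^ n * c / C ≤ J n := by
    intro n
    rw [div_le_iff₀ hC]
    calc ρ ^ n * c ≤ ∫ ω, Pi n ω * ψ (ω n).1 ∂P := key n
      _ ≤ ∫ ω, Pi n ω * C ∂P := by
          refine integral_mono_ae (hintPiψ n) ((hintPi n).mul_const C) (ae_of_all _ ?_)
          intro ω
          exact mul_le_mul_of_nonneg_left (hψ _).2 (hPiPos n ω)
      _ = J n * C := by rw [← integral_mul_const]
  have hJpos : ∀ n, 0 < J n := fun n => lt_of_lt_of_le (by positivity) (hJlow n)
  have hJup : ∀ n, J n ≤ M ^ n := by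
    intro n
    calc J n ≤ ∫ _ω, M ^ n ∂P := integral_mono_ae (hintPi n) (integrable_const _)
          (ae_of_all _ fun ω => hPiBound n ω)
      _ = M ^ n := by simp
  -- pass to logarithms
  have hlogJ : ∀ n : ℕ, (n : ℝ) * Real.log ρ + (Real.log c - Real.log C) ≤ Real.log (J n) := by
    intro n
    have h1 : Real.log (ρ ^ n * c / C) ≤ Real.log (J n) :=
      Real.log_le_log (by positivity) (hJlow n)
    rwa [Real.log_div (by positivity) (ne_of_gt hC), Real.log_mul (by positivity)
      (ne_of_gt hc), Real.log_pow, add_sub_assoc] at h1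
  have hlogJup : ∀ n, Real.log (J n) ≤ (n : ℝ) * Real.log M := by
    intro n
    calc Real.log (J n) ≤ Real.log (M ^ n) := Real.log_le_log (hJpos n) (hJup n)
      _ = (n : ℝ) * Real.log M := by rw [Real.log_pow]
  have hlogM : 0 ≤ Real.log M := Real.log_nonneg hM1
  -- the comparison sequences
  let v : ℕ → ℝ := fun n => Real.log ρ + (Real.log c - Real.log C) / n
  let u : ℕ → ℝ := fun n => Real.log (J n) / n
  have hvu : ∀ n ≥ 1, v n ≤ u n := by
    intro n hn
    have hn' : (0 : ℝ) < n := by exact_mod_cast hn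
    have hv' : v n = ((n : ℝ) * Real.log ρ + (Real.log c - Real.log C)) / n := by
      show Real.log ρ + (Real.log c - Real.log C) / n = _
      field_simp
    rw [hv']
    exact (div_le_div_iff_of_pos_right hn').mpr (hlogJ n)
  have hvt : Tendsto v atTop (nhds (Real.log ρ)) := by
    have := tendsto_const_nhds (x := Real.log ρ) (f := atTop (α := ℕ)) |>.add
      (tendsto_const_div_atTop_nhds_zero_nat (Real.log c - Real.log C))
    simpa using this
  have hub : ∀ n, u n ≤ max (Real.log M) 0 := by
    intro n
    cases n with
    | zero => simp [u, le_max_right]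
    | succ n =>
      have hn' : (0 : ℝ) < (n + 1 : ℕ) := by positivity
      refine le_trans ?_ (le_max_left _ _)
      rw [div_le_iff₀ hn']
      calc Real.log (J (n + 1)) ≤ ((n + 1 : ℕ) : ℝ) * Real.log M := hlogJup (n + 1)
        _ = Real.log M * ((n + 1 : ℕ) : ℝ) := by ring
  have hmain : Real.log ρ ≤ liminf u atTop := by
    rw [← hvt.liminf_eq]
    refine liminf_le_liminf (eventually_atTop.mpr ⟨1, hvu⟩)
      hvt.isBoundedUnder_ge ?_
    exact (isBoundedUnder_of ⟨max (Real.log M) 0, hub⟩).isCoboundedUnder_ge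
  exact hmain
end

section
/- For an irreducible nonnegative d×d matrix Q = [q(x,y)], the logarithm of its Perron–Frobenius eigenvalue satisfies the Donsker–Varadhan variational formula: log ρ(Q) = sup over pairs (π, Π) where Π = [π(y|x)] is a stochastic matrix with π(y|x) > 0 only if q(x,y) > 0, and π is invariant for Π, of Σ_x π(x) Σ_y π(y|x) log(q(x,y)/π(y|x)). -/
private lemma gibbs_aux {d : ℕ} (p a : Fin d → ℝ) (hp : ∀ y, 0 ≤ p y)
    (hps : ∑ y, p y = 1) (has : ∑ y, a y = 1) (ha : ∀ y, 0 ≤ a y)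
    (hsupp : ∀ y, 0 < p y → 0 < a y) :
    ∑ y, p y * Real.log (a y / p y) ≤ 0 := by
  have key : ∀ y, p y * Real.log (a y / p y) ≤ a y - p y := by
    intro y
    rcases (hp y).eq_or_lt with h | h
    · simp [← h, ha y]
    · have ha' := hsupp y h
      have hpos : 0 < a y / p y := div_pos ha' h
      have hlog := Real.log_le_sub_one_of_pos hpos
      calc p y * Real.log (a y / p y) ≤ p y * (a y / p y - 1) :=
            mul_le_mul_of_nonneg_left hlog h.le
        _ = a y - p y := by field_simp
  calc ∑ y, p y * Real.log (a y / p y) ≤ ∑ y, (a y - p y) :=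
        Finset.sum_le_sum (fun y _ => key y)
    _ = 0 := by rw [Finset.sum_sub_distrib, hps, has]; ring

private lemma telescope_aux {d : ℕ} (μ : Fin d → ℝ) (P : Matrix (Fin d) (Fin d) ℝ)
    (lv : Fin d → ℝ) (c : ℝ) (hPr : ∀ x, ∑ y, P x y = 1) (hμs : ∑ x, μ x = 1)
    (hinv : ∀ y, ∑ x, μ x * P x y = μ y) :
    ∑ x, μ x * ∑ y, P x y * (c + lv x - lv y) = c := by
  have h1 : ∀ x, ∑ y, P x y * (c + lv x - lv y) = (c + lv x) - ∑ y, P x y * lv y := by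
    intro x
    have h : ∀ y, P x y * (c + lv x - lv y) = P x y * (c + lv x) - P x y * lv y :=
      fun y => by ring
    simp_rw [h]
    rw [Finset.sum_sub_distrib, ← Finset.sum_mul, hPr, one_mul]
  simp_rw [h1]
  have h2 : ∀ x, μ x * ((c + lv x) - ∑ y, P x y * lv y)
      = μ x * c + μ x * lv x - μ x * ∑ y, P x y * lv y := fun x => by ring
  simp_rw [h2]
  rw [Finset.sum_sub_distrib, Finset.sum_add_distrib, ← Finset.sum_mul, hμs, one_mul]
  have h3 : ∑ x, μ x * ∑ y, P x y * lv y = ∑ x, μ x * lv x := by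
    simp_rw [Finset.mul_sum]
    rw [Finset.sum_comm]
    calc ∑ y, ∑ x, μ x * (P x y * lv y)
        = ∑ y, (∑ x, μ x * P x y) * lv y := by
          refine Finset.sum_congr rfl fun y _ => ?_
          rw [Finset.sum_mul]
          exact Finset.sum_congr rfl fun x _ => by ring
      _ = ∑ x, μ x * lv x := by simp_rw [hinv]
  rw [h3]; ring

/-- Donsker–Varadhan formula for the Perron–Frobenius eigenvalue of an
irreducible nonnegative matrix `Q` on a finite state space (`ρ` is characterized as the
eigenvalue with a strictly positive eigenvector):
`log ρ(Q) = sup_{(π,P)} Σ_x π(x) Σ_y P(x,y) log( q(x,y) / P(x,y) )`,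
where `P` ranges over stochastic matrices with `P(x,y) > 0 ⇒ q(x,y) > 0` and `π` over
invariant probability vectors of `P`. -/
theorem donsker_varadhan_formula_matrix
    {d : ℕ} (hd : 0 < d) (Q : Matrix (Fin d) (Fin d) ℝ)
    (hQnonneg : ∀ x y, 0 ≤ Q x y)
    (hirr : ∀ x y, ∃ n : ℕ, 0 < n ∧ 0 < (Q ^ n) x y)
    (ρ : ℝ) (hρ : 0 < ρ) (v : Fin d → ℝ) (hv : ∀ x, 0 < v x)
    (heig : Q.mulVec v = ρ • v) :
    Real.log ρ = sSup {h : ℝ | ∃ (P : Matrix (Fin d) (Fin d) ℝ) (π : Fin d → ℝ),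
      (∀ x y, 0 ≤ P x y) ∧ (∀ x, ∑ y, P x y = 1) ∧
      (∀ x y, 0 < P x y → 0 < Q x y) ∧
      (∀ x, 0 ≤ π x) ∧ (∑ x, π x = 1) ∧
      (∀ y, ∑ x, π x * P x y = π y) ∧
      h = ∑ x, π x * ∑ y, P x y * Real.log (Q x y / P x y)} := by
  have hρv : ∀ x, 0 < ρ * v x := fun x => mul_pos hρ (hv x)
  -- The twisted kernel
  set Ps : Matrix (Fin d) (Fin d) ℝ := Matrix.of (fun x y => Q x y * v y / (ρ * v x)) with hPsdef
  have hPsapp : ∀ x y, Ps x y = Q x y * v y / (ρ * v x) := fun x y => rfl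
  have hPsnn : ∀ x y, 0 ≤ Ps x y := fun x y =>
    div_nonneg (mul_nonneg (hQnonneg x y) (hv y).le) (hρv x).le
  have hrow : ∀ x, ∑ y, Ps x y = 1 := by
    intro x
    have h1 : ∑ y, Q x y * v y = ρ * v x := by
      have := congrFun heig x
      simpa [Matrix.mulVec, dotProduct] using this
    simp_rw [hPsapp]
    rw [← Finset.sum_div, h1, div_self (hρv x).ne']
  have hPspos : ∀ x y, 0 < Q x y → 0 < Ps x y := by
    intro x y h
    rw [hPsapp]
    exact div_pos (mul_pos h (hv y)) (hρv x)
  have hsupp : ∀ x y, 0 < Ps x y → 0 < Q x y := by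
    intro x y h
    rcases (hQnonneg x y).eq_or_lt with h0 | h0
    · exfalso; rw [hPsapp, ← h0] at h; simp at h
    · exact h0
  -- Existence of an invariant probability vector for `Ps`
  have hdet : (Ps - 1).det = 0 := by
    rw [← Matrix.exists_mulVec_eq_zero_iff]
    refine ⟨fun _ => 1, ?_, ?_⟩
    · intro h
      have := congrFun h ⟨0, hd⟩
      norm_num at this
    · funext x
      simp [Matrix.sub_mulVec, Matrix.mulVec, dotProduct, Matrix.one_apply, hrow x]
  have hdetT : (Ps.transpose - 1).det = 0 := by
    have : (Ps.transpose - 1) = (Ps - 1).transpose := by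
      rw [Matrix.transpose_sub, Matrix.transpose_one]
    rw [this, Matrix.det_transpose]
    exact hdet
  obtain ⟨u, hu0, huv⟩ := Matrix.exists_mulVec_eq_zero_iff.mpr hdetT
  have hinv0 : ∀ y, ∑ x, u x * Ps x y = u y := by
    intro y
    have h := congrFun huv y
    simp only [Matrix.mulVec, dotProduct, Matrix.sub_apply, Matrix.transpose_apply,
      Matrix.one_apply, Pi.zero_apply, sub_mul, ite_mul, one_mul, zero_mul] at h
    rw [Finset.sum_sub_distrib] at h
    simp only [Finset.sum_ite_eq, Finset.mem_univ, if_true] at h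
    rw [sub_eq_zero] at h
    rw [← h]
    exact Finset.sum_congr rfl fun x _ => mul_comm _ _
  have habs : ∀ y, ∑ x, |u x| * Ps x y = |u y| := by
    have hge : ∀ y, |u y| ≤ ∑ x, |u x| * Ps x y := by
      intro y
      rw [← hinv0 y]
      calc |∑ x, u x * Ps x y| ≤ ∑ x, |u x * Ps x y| := Finset.abs_sum_le_sum_abs _ _
        _ = ∑ x, |u x| * Ps x y := by
            refine Finset.sum_congr rfl fun x _ => ?_
            rw [abs_mul, abs_of_nonneg (hPsnn x y)]
    have hsum : ∑ y, ((∑ x, |u x| * Ps x y) - |u y|) = 0 := by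
      rw [Finset.sum_sub_distrib]
      rw [Finset.sum_comm]
      simp_rw [← Finset.mul_sum, hrow, mul_one, sub_self]
    have hall := (Finset.sum_eq_zero_iff_of_nonneg
      (fun y _ => sub_nonneg.mpr (hge y))).mp hsum
    intro y
    have := hall y (Finset.mem_univ y)
    linarith [this, sub_eq_zero.mp this]
  set c : ℝ := ∑ x, |u x| with hcdef
  have hc : 0 < c := by
    obtain ⟨x0, hx0⟩ := Function.ne_iff.mp hu0
    have h1 : 0 < |u x0| := abs_pos.mpr hx0
    have h2 : |u x0| ≤ c := Finset.single_le_sum (fun x _ => abs_nonneg (u x)) (Finset.mem_univ x0)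
    linarith
  set π : Fin d → ℝ := fun x => |u x| / c with hπdef
  have hπnn : ∀ x, 0 ≤ π x := fun x => div_nonneg (abs_nonneg _) hc.le
  have hπsum : ∑ x, π x = 1 := by
    simp_rw [hπdef]
    rw [← Finset.sum_div, div_self hc.ne']
  have hπinv : ∀ y, ∑ x, π x * Ps x y = π y := by
    intro y
    simp_rw [hπdef, div_mul_eq_mul_div]
    rw [← Finset.sum_div, habs]
  -- value at the twisted kernel
  have hterm : ∀ x y, Ps x y * Real.log (Q x y / Ps x y)
      = Ps x y * (Real.log ρ + Real.log (v x) - Real.log (v y)) := by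
    intro x y
    rcases (hQnonneg x y).eq_or_lt with h | h
    · have hz : Ps x y = 0 := by rw [hPsapp, ← h]; simp
      simp [hz]
    · have hq : Q x y / Ps x y = ρ * v x / v y := by
        rw [hPsapp, div_div_eq_mul_div, mul_div_mul_left _ _ h.ne']
      rw [hq, Real.log_div (hρv x).ne' (hv y).ne', Real.log_mul hρ.ne' (hv x).ne']
  have hval : ∑ x, π x * ∑ y, Ps x y * Real.log (Q x y / Ps x y) = Real.log ρ := by
    simp_rw [hterm]
    exact telescope_aux π Ps (fun x => Real.log (v x)) (Real.log ρ) hrow hπsum hπinv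
  refine (IsGreatest.csSup_eq ⟨?_, ?_⟩).symm
  · exact ⟨Ps, π, hPsnn, hrow, hsupp, hπnn, hπsum, hπinv, hval.symm⟩
  · rintro h ⟨P, μ, hPn, hPr, hsup, hμn, hμs, hμinv, rfl⟩
    have hterm2 : ∀ x y, P x y * Real.log (Q x y / P x y)
        = P x y * (Real.log ρ + Real.log (v x) - Real.log (v y))
          + P x y * Real.log (Ps x y / P x y) := by
      intro x y
      rcases (hPn x y).eq_or_lt with h0 | h0
      · simp [← h0]
      · have hQ := hsup x y h0
        have hPs' : 0 < Ps x y := hPspos x y hQ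
        have hkey : (ρ * v x / v y) * Ps x y = Q x y := by
          have hvy := (hv y).ne'
          have hρvx := (hρv x).ne'
          have hvx := (hv x).ne'
          rw [hPsapp]
          field_simp
        have hsplit : Q x y / P x y = (ρ * v x / v y) * (Ps x y / P x y) := by
          rw [← mul_div_assoc, hkey]
        rw [hsplit, Real.log_mul (div_pos (hρv x) (hv y)).ne' (div_pos hPs' h0).ne',
          Real.log_div (hρv x).ne' (hv y).ne', Real.log_mul hρ.ne' (hv x).ne']
        ring
    have hsplit2 : ∑ x, μ x * ∑ y, P x y * Real.log (Q x y / P x y)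
        = (∑ x, μ x * ∑ y, P x y * (Real.log ρ + Real.log (v x) - Real.log (v y)))
          + ∑ x, μ x * ∑ y, P x y * Real.log (Ps x y / P x y) := by
      rw [← Finset.sum_add_distrib]
      refine Finset.sum_congr rfl fun x _ => ?_
      rw [← mul_add, ← Finset.sum_add_distrib]
      congr 1
      exact Finset.sum_congr rfl fun y _ => hterm2 x y
    rw [hsplit2,
      telescope_aux μ P (fun x => Real.log (v x)) (Real.log ρ) hPr hμs hμinv]
    have hsecond : ∑ x, μ x * ∑ y, P x y * Real.log (Ps x y / P x y) ≤ 0 := by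
      refine Finset.sum_nonpos fun x _ => mul_nonpos_of_nonneg_of_nonpos (hμn x) ?_
      exact gibbs_aux (fun y => P x y) (fun y => Ps x y) (hPn x) (hPr x) (hrow x)
        (hPsnn x) (fun y hy => hPspos x y (hsup x y hy))
    linarith
end
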